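/- Let A : H1 → H2 be (S,T)-complementable. Then A/(S,T) is the maximum, with respect to the minus order ≤⁻, of the set M⁻(A,S,T) = {C ∈ L(H1,H2) : C ≤⁻ A, R(C) ⊆ T, R(C*) ⊆ S}. -/

import Mathlib

open ContinuousLinearMap Submodule

noncomputable def projC {H : Type*} [NormedAddCommGroup H] [InnerProductSpace ℂ H]
    [CompleteSpace H] (S : Submodule ℂ H) [CompleteSpace S] : H →L[ℂ] H :=
  S.subtypeL ∘L orthogonalProjection S

variable {H₁ H₂ : Type*} [NormedAddCommGroup H₁] [InnerProductSpace ℂ H₁] [CompleteSpace H₁]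
  [NormedAddCommGroup H₂] [InnerProductSpace ℂ H₂] [CompleteSpace H₂]

noncomputable def blk11 (S : Submodule ℂ H₁) [CompleteSpace S]
    (T : Submodule ℂ H₂) [CompleteSpace T] (A : H₁ →L[ℂ] H₂) : H₁ →L[ℂ] H₂ :=
  projC T ∘L A ∘L projC S

noncomputable def blk12 (S : Submodule ℂ H₁) [CompleteSpace S]
    (T : Submodule ℂ H₂) [CompleteSpace T] (A : H₁ →L[ℂ] H₂) : H₁ →L[ℂ] H₂ :=
  projC T ∘L A ∘L (1 - projC S)

noncomputable def blk21 (S : Submodule ℂ H₁) [CompleteSpace S]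
    (T : Submodule ℂ H₂) [CompleteSpace T] (A : H₁ →L[ℂ] H₂) : H₁ →L[ℂ] H₂ :=
  (1 - projC T) ∘L A ∘L projC S

noncomputable def blk22 (S : Submodule ℂ H₁) [CompleteSpace S]
    (T : Submodule ℂ H₂) [CompleteSpace T] (A : H₁ →L[ℂ] H₂) : H₁ →L[ℂ] H₂ :=
  (1 - projC T) ∘L A ∘L (1 - projC S)

/-- `As` is the bilateral shorted operator `A/(S,T)`: there are `Bh = |A22|^(1/2)`,
`Dh = |A22*|^(1/2)` (unique positive fourth roots of `A22* A22` resp. `A22 A22*`),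
`U` the partial isometry of the polar decomposition of `A22`, and `E`, `F` the reduced
Douglas solutions of `A21 = |A22*|^(1/2) U X` and `A12* = |A22|^(1/2) X`, with
`As = A11 - F* E`. -/
def IsShorted (S : Submodule ℂ H₁) [CompleteSpace S] (T : Submodule ℂ H₂) [CompleteSpace T]
    (A As : H₁ →L[ℂ] H₂) : Prop :=
  ∃ (Bh : H₁ →L[ℂ] H₁) (Dh : H₂ →L[ℂ] H₂) (U : H₁ →L[ℂ] H₂) (E : H₁ →L[ℂ] H₁)
      (F : H₂ →L[ℂ] H₁),
    Bh.IsPositive ∧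
    Bh ∘L Bh ∘L Bh ∘L Bh = adjoint (blk22 S T A) ∘L blk22 S T A ∧
    Dh.IsPositive ∧
    Dh ∘L Dh ∘L Dh ∘L Dh = blk22 S T A ∘L adjoint (blk22 S T A) ∧
    blk22 S T A = U ∘L (Bh ∘L Bh) ∧
    (∀ x, blk22 S T A x = 0 → U x = 0) ∧
    (Dh ∘L U) ∘L E = blk21 S T A ∧
    LinearMap.range (E : H₁ →ₗ[ℂ] H₁) ≤ (LinearMap.ker (Dh ∘L U : H₁ →ₗ[ℂ] H₂))ᗮ ∧
    Bh ∘L F = adjoint (blk12 S T A) ∧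
    LinearMap.range (F : H₂ →ₗ[ℂ] H₁) ≤ (LinearMap.ker (Bh : H₁ →ₗ[ℂ] H₁))ᗮ ∧
    As = blk11 S T A - adjoint F ∘L E

/-- `A` is `(S,T)`-complementable. -/
def IsComplementable (S : Submodule ℂ H₁) [CompleteSpace S] (T : Submodule ℂ H₂)
    [CompleteSpace T] (A : H₁ →L[ℂ] H₂) : Prop :=
  LinearMap.range (blk21 S T A : H₁ →ₗ[ℂ] H₂) ≤ LinearMap.range (blk22 S T A : H₁ →ₗ[ℂ] H₂) ∧
  LinearMap.range (adjoint (blk12 S T A) : H₂ →ₗ[ℂ] H₁) ≤ LinearMap.range (adjoint (blk22 S T A) : H₂ →ₗ[ℂ] H₁)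

/-- The minus order, via projections. -/
def minusLE {K₁ K₂ : Type*} [NormedAddCommGroup K₁] [InnerProductSpace ℂ K₁]
    [CompleteSpace K₁] [NormedAddCommGroup K₂] [InnerProductSpace ℂ K₂] [CompleteSpace K₂]
    (C A : K₁ →L[ℂ] K₂) : Prop :=
  ∃ (Q : K₂ →L[ℂ] K₂) (P : K₁ →L[ℂ] K₁),
    IsIdempotentElem Q ∧ IsIdempotentElem P ∧
    C = Q ∘L A ∧ adjoint C = P ∘L adjoint A

/-
Complementability gives Douglas solutions `N`, `M` of `A₂₂* N = A₁₂*` and `A₂₂ M = A₂₁`. From the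
data defining `A/(S,T) = A₁₁ - F* E` one gets `|A₂₂*|^(1/2) = U |A₂₂|^(1/2) U*`, and then
`F - (|A₂₂*|^(1/2) U)* N` lies in the kernel of `|A₂₂*|^(1/2) U`, which is orthogonal to the range
of `E`; hence `F* E = N* A₂₁ = A₁₂ M`. With `P_T`, `P_S` the orthogonal projections, the
idempotents `Q = P_T (1 - N* (1 - P_T))` and `P = P_S (1 - M* (1 - P_S))` therefore satisfy
`Q A = A/(S,T)` and `P A* = A/(S,T)*`, and they fix every operator with range in `T`, resp. `S`.
So if `C = q A`, `C* = p A*` with ranges in `T` and `S`, then `A/(S,T) p* = Q A p* = Q C = C` and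
`A/(S,T)* q* = C*`, that is `C = q A/(S,T)` and `C* = p A/(S,T)*`.
-/

section CStarRing

variable {R : Type*} [NonUnitalNormedRing R] [StarRing R] [CStarRing R] {b x : R}

lemma IsSelfAdjoint.mul_eq_zero_of_mul_self_mul (hb : IsSelfAdjoint b) (h : b * b * x = 0) :
    b * x = 0 := by
  rw [← CStarRing.star_mul_self_eq_zero_iff, star_mul, hb.star_eq, mul_assoc, ← mul_assoc b, h,
    mul_zero]

lemma IsSelfAdjoint.mul_eq_zero_of_mul_mul_self (hb : IsSelfAdjoint b) (h : x * b * b = 0) :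
    x * b = 0 := by
  have h' : b * b * star x = 0 := by
    simpa [hb.star_eq, mul_assoc] using congrArg star h
  simpa [hb.star_eq] using congrArg star (hb.mul_eq_zero_of_mul_self_mul h')

lemma IsSelfAdjoint.mul_mul_eq_zero_of_mul_self_mul_mul_self (hb : IsSelfAdjoint b)
    (h : b * b * x * (b * b) = 0) : b * x * b = 0 := by
  refine hb.mul_eq_zero_of_mul_mul_self (x := b * x) ?_
  have := hb.mul_eq_zero_of_mul_self_mul (x := x * (b * b)) (by simpa only [mul_assoc] using h)
  simpa only [mul_assoc] using this

end CStarRing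

lemma IsIdempotentElem.mul_one_sub_mul_one_sub {R : Type*} [Ring R] {p : R}
    (hp : IsIdempotentElem p) (x : R) : IsIdempotentElem (p * (1 - x * (1 - p))) := by
  have h : (1 - x * (1 - p)) * p = p := by
    rw [sub_mul, one_mul, mul_assoc, sub_mul, one_mul, hp.eq, sub_self, mul_zero, sub_zero]
  unfold IsIdempotentElem
  rw [mul_assoc, ← mul_assoc (1 - x * (1 - p)), h, ← mul_assoc, hp.eq]

section Projections

variable {G G₁ : Type*} [NormedAddCommGroup G] [InnerProductSpace ℂ G] [CompleteSpace G]
  [NormedAddCommGroup G₁] [InnerProductSpace ℂ G₁]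

lemma isSelfAdjoint_projC (S : Submodule ℂ G) [CompleteSpace S] : IsSelfAdjoint (projC S) :=
  isSelfAdjoint_starProjection S

lemma adjoint_projC (S : Submodule ℂ G) [CompleteSpace S] : adjoint (projC S) = projC S :=
  (isSelfAdjoint_projC S).adjoint_eq

lemma adjoint_one_sub_projC (S : Submodule ℂ G) [CompleteSpace S] :
    adjoint (1 - projC S) = 1 - projC S :=
  ((IsSelfAdjoint.one _).sub (isSelfAdjoint_projC S)).adjoint_eq

@[simp]
lemma projC_projC_apply (S : Submodule ℂ G) [CompleteSpace S] (x : G) :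
    projC S (projC S x) = projC S x :=
  starProjection_eq_self_iff.mpr (S.starProjection_apply_mem x)

lemma projC_comp_of_range_le {S : Submodule ℂ G} [CompleteSpace S] {u : G₁ →L[ℂ] G}
    (h : LinearMap.range (u : G₁ →ₗ[ℂ] G) ≤ S) : projC S ∘L u = u := by
  ext x
  exact starProjection_eq_self_iff.mpr (h ⟨x, rfl⟩)

noncomputable def obliqueProj (T : Submodule ℂ G) [CompleteSpace T] (X : G →L[ℂ] G) :
    G →L[ℂ] G :=
  projC T * (1 - X * (1 - projC T))

variable (T : Submodule ℂ G) [CompleteSpace T] (X : G →L[ℂ] G)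

lemma isIdempotentElem_obliqueProj : IsIdempotentElem (obliqueProj T X) :=
  T.isIdempotentElem_starProjection.mul_one_sub_mul_one_sub X

lemma range_obliqueProj_comp_le (u : G₁ →L[ℂ] G) :
    LinearMap.range (obliqueProj T X ∘L u : G₁ →ₗ[ℂ] G) ≤ T := by
  rintro _ ⟨x, rfl⟩
  exact T.starProjection_apply_mem _

lemma obliqueProj_comp (u : G₁ →L[ℂ] G) :
    obliqueProj T X ∘L u = projC T ∘L u - projC T ∘L X ∘L (1 - projC T) ∘L u := by
  ext x
  simp [obliqueProj]

lemma obliqueProj_comp_of_range_le {u : G₁ →L[ℂ] G}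
    (h : LinearMap.range (u : G₁ →ₗ[ℂ] G) ≤ T) : obliqueProj T X ∘L u = u := by
  have h' : (1 - projC T) ∘L u = 0 := by
    ext x
    simp [projC_comp_of_range_le h]
  rw [obliqueProj_comp, h', comp_zero, comp_zero, sub_zero, projC_comp_of_range_le h]

end Projections

section Operators

variable {G G₁ G₂ G₃ : Type*} [NormedAddCommGroup G] [InnerProductSpace ℂ G]
  [NormedAddCommGroup G₁] [InnerProductSpace ℂ G₁]
  [NormedAddCommGroup G₂] [InnerProductSpace ℂ G₂]
  [NormedAddCommGroup G₃] [InnerProductSpace ℂ G₃]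

lemma eq_of_mem_orthogonal_ker {B : G₁ →L[ℂ] G₂} {x x' : G₁}
    (hx : x ∈ (LinearMap.ker (B : G₁ →ₗ[ℂ] G₂))ᗮ)
    (hx' : x' ∈ (LinearMap.ker (B : G₁ →ₗ[ℂ] G₂))ᗮ) (h : B x = B x') : x = x' :=
  sub_eq_zero.mp <| Submodule.disjoint_def.mp (orthogonal_disjoint _).symm _
    (sub_mem hx hx') (by simp [h])

lemma exists_comp_eq_of_range_le [CompleteSpace G₁] [CompleteSpace G₂]
    {B : G₁ →L[ℂ] G₃} {C : G₂ →L[ℂ] G₃}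
    (h : LinearMap.range (C : G₂ →ₗ[ℂ] G₃) ≤ LinearMap.range (B : G₁ →ₗ[ℂ] G₃)) :
    ∃ D : G₂ →L[ℂ] G₁, B ∘L D = C := by
  set K := (LinearMap.ker (B : G₁ →ₗ[ℂ] G₃))ᗮ
  set BK := (B : G₁ →ₗ[ℂ] G₃) ∘ₗ K.subtype
  have hBK : Function.Injective BK := fun x x' hxx' =>
    Subtype.ext (eq_of_mem_orthogonal_ker x.2 x'.2 hxx')
  have hC : ∀ y, C y ∈ LinearMap.range BK := by
    intro y
    obtain ⟨x, hx⟩ := h ⟨y, rfl⟩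
    have hKperp : Kᗮ ≤ LinearMap.ker (B : G₁ →ₗ[ℂ] G₃) := by
      rw [orthogonal_orthogonal_eq_closure,
        (ContinuousLinearMap.isClosed_ker B).submodule_topologicalClosure_eq]
    refine ⟨K.orthogonalProjectionOnto x, ?_⟩
    have h0 := hKperp (K.sub_starProjection_mem_orthogonal x)
    rw [LinearMap.mem_ker, map_sub, sub_eq_zero] at h0
    exact h0.symm.trans hx
  set e := LinearEquiv.ofInjective BK hBK
  set f : G₂ →ₗ[ℂ] G₁ :=
    K.subtype ∘ₗ e.symm.toLinearMap ∘ₗ (C : G₂ →ₗ[ℂ] G₃).codRestrict _ hC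
  have hfK : ∀ y, f y ∈ K := fun y => Subtype.prop _
  have hBf : ∀ y, B (f y) = C y := fun y => by
    change BK (e.symm _) = C y
    rw [← LinearEquiv.ofInjective_apply (h := hBK), LinearEquiv.apply_symm_apply]
    rfl
  have hf : Continuous f := by
    refine f.continuous_of_seq_closed_graph fun u x y hu hfu => ?_
    have hyK : y ∈ K :=
      (LinearMap.ker _).isClosed_orthogonal.mem_of_tendsto hfu (.of_forall fun n => hfK _)
    refine eq_of_mem_orthogonal_ker hyK (hfK x)
      (tendsto_nhds_unique ((B.continuous.tendsto y).comp hfu) ?_)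
    simpa [Function.comp_def, hBf] using (C.continuous.tendsto x).comp hu
  exact ⟨⟨f, hf⟩, ContinuousLinearMap.ext hBf⟩

variable [CompleteSpace G₁] [CompleteSpace G₂]

lemma comp_adjoint_comp_comp_eq_of_fourth_power {B : G₁ →L[ℂ] G₁} (hB : IsSelfAdjoint B)
    {U : G₁ →L[ℂ] G₂} {Z : G₁ →L[ℂ] G₂} (hZ : Z = U ∘L (B ∘L B))
    (h : B ∘L B ∘L B ∘L B = adjoint Z ∘L Z) :
    B ∘L adjoint U ∘L U ∘L B = B ∘L B := by
  subst hZ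
  have h' : B * B * (B * B) = B * B * (adjoint U ∘L U) * (B * B) := by
    simpa only [adjoint_comp, hB.adjoint_eq, ContinuousLinearMap.mul_def, comp_assoc] using h
  have h'' : B * B * (adjoint U ∘L U - 1) * (B * B) = 0 := by
    rw [mul_sub, sub_mul, mul_one, ← h', sub_self]
  have := hB.mul_mul_eq_zero_of_mul_self_mul_mul_self h''
  rw [mul_sub, sub_mul, mul_one, sub_eq_zero] at this
  simpa only [ContinuousLinearMap.mul_def, comp_assoc] using this

lemma eq_comp_comp_adjoint_of_fourth_power {B : G₁ →L[ℂ] G₁} {D : G₂ →L[ℂ] G₂}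
    (hB : B.IsPositive) (hD : D.IsPositive) {U : G₁ →L[ℂ] G₂} {Z : G₁ →L[ℂ] G₂}
    (hZ : Z = U ∘L (B ∘L B)) (hBU : B ∘L adjoint U ∘L U ∘L B = B ∘L B)
    (h : D ∘L D ∘L D ∘L D = Z ∘L adjoint Z) :
    D = U ∘L B ∘L adjoint U := by
  subst hZ
  set R := U ∘L B ∘L adjoint U
  have hR : R.IsPositive := hB.conj_adjoint U
  have hBU' : ∀ x, B (adjoint U (U (B x))) = B (B x) := fun x => congr($hBU x)
  have hRR : D * D * (D * D) = R * R * (R * R) := by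
    ext x
    have := congr($h x)
    simp only [comp_apply, adjoint_comp, hB.isSelfAdjoint.adjoint_eq] at this
    simp [R, this, hBU']
  rwa [CFC.mul_self_eq_mul_self_iff _ _ hD.isSelfAdjoint.mul_self_nonneg
      hR.isSelfAdjoint.mul_self_nonneg,
    CFC.mul_self_eq_mul_self_iff _ _ ((nonneg_iff_isPositive D).2 hD)
      ((nonneg_iff_isPositive R).2 hR)] at hRR

lemma adjoint_comp_eq_adjoint_comp_of_range_le_orthogonal_ker [CompleteSpace G]
    {B : G₁ →L[ℂ] G₁} (hB : IsSelfAdjoint B) {U : G₁ →L[ℂ] G₂} {Z : G₁ →L[ℂ] G₂}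
    {D : G₂ →L[ℂ] G₂} (hZ : Z = U ∘L (B ∘L B)) (hU : ∀ x, Z x = 0 → U x = 0)
    (hBU : B ∘L adjoint U ∘L U ∘L B = B ∘L B) (hD : D = U ∘L B ∘L adjoint U)
    {E : G₃ →L[ℂ] G₁}
    (hE : LinearMap.range (E : G₃ →ₗ[ℂ] G₁) ≤ (LinearMap.ker (D ∘L U : G₁ →ₗ[ℂ] G₂))ᗮ)
    {F : G →L[ℂ] G₁} {N : G →L[ℂ] G₂} (hF : B ∘L F = adjoint Z ∘L N) :
    adjoint F ∘L E = adjoint N ∘L (D ∘L U) ∘L E := by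
  set W := F - adjoint (D ∘L U) ∘L N
  have hBW : ∀ y, B (W y) = 0 := fun y => by
    have hBU' : ∀ x, B (adjoint U (U (B x))) = B (B x) := fun x => congr($hBU x)
    have hF' := congr($hF y)
    simp only [hZ, adjoint_comp, hB.adjoint_eq, comp_apply] at hF'
    simp [W, hD, adjoint_comp, hB.adjoint_eq, hBU', hF']
  have hW : ∀ y, W y ∈ LinearMap.ker (D ∘L U : G₁ →ₗ[ℂ] G₂) := fun y => by
    have hUW : U (W y) = 0 := hU _ (by simp [hZ, hBW])
    simp [hUW]
  have hWE : adjoint W ∘L E = 0 := by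
    ext x
    refine ext_inner_right ℂ fun y => ?_
    rw [comp_apply, adjoint_inner_left, zero_apply, inner_zero_left]
    exact inner_left_of_mem_orthogonal (hW y) (hE ⟨x, rfl⟩)
  rwa [map_sub, adjoint_comp, adjoint_adjoint, sub_comp, sub_eq_zero, comp_assoc] at hWE

end Operators

section Blocks

variable (S : Submodule ℂ H₁) [CompleteSpace S] (T : Submodule ℂ H₂) [CompleteSpace T]
  (A : H₁ →L[ℂ] H₂)

lemma adjoint_blk11 : adjoint (blk11 S T A) = blk11 T S (adjoint A) := by
  simp only [blk11, adjoint_comp, adjoint_projC, comp_assoc]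

lemma adjoint_blk12 : adjoint (blk12 S T A) = blk21 T S (adjoint A) := by
  simp only [blk12, blk21, adjoint_comp, adjoint_projC, adjoint_one_sub_projC, comp_assoc]

lemma adjoint_blk21 : adjoint (blk21 S T A) = blk12 T S (adjoint A) := by
  simp only [blk12, blk21, adjoint_comp, adjoint_projC, adjoint_one_sub_projC, comp_assoc]

lemma adjoint_blk22 : adjoint (blk22 S T A) = blk22 T S (adjoint A) := by
  simp only [blk22, adjoint_comp, adjoint_one_sub_projC, comp_assoc]

lemma obliqueProj_comp_eq {X : H₂ →L[ℂ] H₂} {Y : H₁ →L[ℂ] H₁}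
    (hX : X ∘L blk22 S T A = blk12 S T A) (hY : blk22 S T A ∘L Y = blk21 S T A) :
    obliqueProj T X ∘L A = blk11 S T A - blk12 S T A ∘L Y := by
  have hrow₁ : projC T ∘L A = blk11 S T A + blk12 S T A := by
    ext x
    simp [blk11, blk12]
  have hrow₂ : (1 - projC T) ∘L A = blk21 S T A + blk22 S T A := by
    ext x
    simp [blk21, blk22]
  have hT : projC T ∘L blk12 S T A = blk12 S T A := by
    ext x
    simp [blk12]
  have hXY : projC T ∘L X ∘L blk21 S T A = blk12 S T A ∘L Y := by
    rw [← hY, ← comp_assoc X, hX, ← comp_assoc, hT]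
  rw [obliqueProj_comp, hrow₁, hrow₂, comp_add, comp_add, hX, hT, hXY]
  abel

end Blocks

lemma IsShorted.eq_blk11_sub_adjoint_comp {S : Submodule ℂ H₁} [CompleteSpace S]
    {T : Submodule ℂ H₂} [CompleteSpace T] {A As : H₁ →L[ℂ] H₂} (hAs : IsShorted S T A As)
    {N : H₂ →L[ℂ] H₂} (hN : adjoint (blk22 S T A) ∘L N = adjoint (blk12 S T A)) :
    As = blk11 S T A - adjoint N ∘L blk21 S T A := by
  obtain ⟨B, D, U, E, F, hB, hB4, hD, hD4, hZ, hU, hE, hEr, hF, -, rfl⟩ := hAs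
  have hBU := comp_adjoint_comp_comp_eq_of_fourth_power hB.isSelfAdjoint hZ hB4
  have hDU := eq_comp_comp_adjoint_of_fourth_power hB hD hZ hBU hD4
  rw [adjoint_comp_eq_adjoint_comp_of_range_le_orthogonal_ker hB.isSelfAdjoint hZ hU hBU hDU hEr
    (hF.trans hN.symm), hE]

lemma minusLE_of_comp_eq {K₁ K₂ : Type*} [NormedAddCommGroup K₁] [InnerProductSpace ℂ K₁]
    [CompleteSpace K₁] [NormedAddCommGroup K₂] [InnerProductSpace ℂ K₂] [CompleteSpace K₂]
    {C A A' : K₁ →L[ℂ] K₂} (hCA : minusLE C A) {Q : K₂ →L[ℂ] K₂} {P : K₁ →L[ℂ] K₁}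
    (hQA : Q ∘L A = A') (hQC : Q ∘L C = C) (hPA : P ∘L adjoint A = adjoint A')
    (hPC : P ∘L adjoint C = adjoint C) : minusLE C A' := by
  obtain ⟨q, p, hq, hp, hCq, hCp⟩ := hCA
  have hC : A ∘L adjoint p = C := by
    simpa only [adjoint_comp, adjoint_adjoint] using (congrArg adjoint hCp).symm
  have hC' : adjoint A ∘L adjoint q = adjoint C := by
    simpa only [adjoint_comp] using (congrArg adjoint hCq).symm
  have h₁ : A' ∘L adjoint p = C := by rw [← hQA, comp_assoc, hC, hQC]
  have h₂ : adjoint A' ∘L adjoint q = adjoint C := by rw [← hPA, comp_assoc, hC', hPC]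
  refine ⟨q, p, hq, hp, ?_, ?_⟩
  · simpa only [adjoint_comp, adjoint_adjoint] using (congrArg adjoint h₂).symm
  · simpa only [adjoint_comp, adjoint_adjoint] using (congrArg adjoint h₁).symm

theorem shorted_is_max_minus
    (S : Submodule ℂ H₁) [CompleteSpace S] (T : Submodule ℂ H₂) [CompleteSpace T]
    (A As : H₁ →L[ℂ] H₂) (hc : IsComplementable S T A) (hAs : IsShorted S T A As) :
    (minusLE As A ∧ LinearMap.range (As : H₁ →ₗ[ℂ] H₂) ≤ T ∧ LinearMap.range (adjoint As : H₂ →ₗ[ℂ] H₁) ≤ S) ∧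
    (∀ C : H₁ →L[ℂ] H₂, minusLE C A → LinearMap.range (C : H₁ →ₗ[ℂ] H₂) ≤ T →
      LinearMap.range (adjoint C : H₂ →ₗ[ℂ] H₁) ≤ S → minusLE C As) := by
  obtain ⟨N, hN⟩ := exists_comp_eq_of_range_le hc.2
  obtain ⟨M, hM⟩ := exists_comp_eq_of_range_le hc.1
  have hN' : adjoint N ∘L blk22 S T A = blk12 S T A := by
    simpa only [adjoint_comp, adjoint_adjoint] using congrArg adjoint hN
  have hN'' : blk22 T S (adjoint A) ∘L N = blk21 T S (adjoint A) := by
    rw [← adjoint_blk22, ← adjoint_blk12]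
    exact hN
  have hM' : adjoint M ∘L blk22 T S (adjoint A) = blk12 T S (adjoint A) := by
    simpa only [adjoint_comp, adjoint_blk22, adjoint_blk21] using congrArg adjoint hM
  have hAs' := hAs.eq_blk11_sub_adjoint_comp hN
  have hQA : obliqueProj T (adjoint N) ∘L A = As := by
    rw [obliqueProj_comp_eq S T A hN' hM, hAs', ← hM, ← comp_assoc, hN']
  have hPA : obliqueProj S (adjoint M) ∘L adjoint A = adjoint As := by
    rw [obliqueProj_comp_eq T S (adjoint A) hM' hN'', hAs', map_sub, adjoint_comp,
      adjoint_adjoint, adjoint_blk11, adjoint_blk21]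
  refine ⟨⟨⟨_, _, isIdempotentElem_obliqueProj _ _, isIdempotentElem_obliqueProj _ _, hQA.symm,
    hPA.symm⟩, hQA ▸ range_obliqueProj_comp_le _ _ _, hPA ▸ range_obliqueProj_comp_le _ _ _⟩, ?_⟩
  intro C hC hCT hCS
  exact minusLE_of_comp_eq hC hQA (obliqueProj_comp_of_range_le _ _ hCT) hPA
    (obliqueProj_comp_of_range_le _ _ hCS)
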